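/- arXiv:1905.13467 — 4 statements merged into one kernel-verified Lean document; each statement's English description precedes it below -/
import Mathlib

section
/- Reachability of consistent configurations: Let f be a Boolean network of dimension n and ⟨f⟩ its interval-semantics encoding (a BN of dimension 2n). For every z ∈ 𝔹^{2n} with α(γ(z)) ≠ z there exists y ∈ 𝔹^n such that z →*_{⟨f⟩} α(y), i.e. the consistent configuration α(y) is reachable from z under the asynchronous transition relation of ⟨f⟩. -/
/-- Asynchronous transition relation of a Boolean network `f`:
`x → y` iff exactly one component `i` differs and `y i = f i x`. -/
def asyncStep {ι : Type} (f : ι → (ι → Bool) → Bool) (x y : ι → Bool) : Prop :=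
  ∃ i : ι, x i ≠ y i ∧ (∀ j : ι, j ≠ i → x j = y j) ∧ y i = f i x

/-- Index of the "write" node `2i-1` (0-indexed: `2i`). -/
def wIdx {n : ℕ} (i : Fin n) : Fin (2 * n) := ⟨2 * i.val, by have := i.isLt; omega⟩

/-- Index of the "read" node `2i` (0-indexed: `2i+1`). -/
def rIdx {n : ℕ} (i : Fin n) : Fin (2 * n) := ⟨2 * i.val + 1, by have := i.isLt; omega⟩

/-- `γ : 𝔹^{2n} → 𝔹^n`, projection on read nodes. -/
def gam {n : ℕ} (z : Fin (2 * n) → Bool) : Fin n → Bool := fun i => z (rIdx i)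

/-- `α : 𝔹^n → 𝔹^{2n}`, consistent configuration. -/
def alph {n : ℕ} (x : Fin n → Bool) : Fin (2 * n) → Bool :=
  fun k => x ⟨k.val / 2, by have := k.isLt; omega⟩

/-- Interval-semantics encoding `⟨f⟩` of a Boolean network `f`. -/
def encode {n : ℕ} (f : Fin n → (Fin n → Bool) → Bool) :
    Fin (2 * n) → (Fin (2 * n) → Bool) → Bool := fun k z =>
  let i : Fin n := ⟨k.val / 2, by have := k.isLt; omega⟩
  if k.val % 2 = 0 then
    (f i (gam z) && (!(z (rIdx i)) || z (wIdx i))) || (!(z (rIdx i)) && z (wIdx i))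
  else
    z (wIdx i)

/-- Positive edge `(j,i)` of the influence graph `G(f)`. -/
def posEdge {ι : Type} (f : ι → (ι → Bool) → Bool) (j i : ι) : Prop :=
  ∃ x y : ι → Bool, (∀ k : ι, k ≠ j → x k = y k) ∧ x j = false ∧ y j = true ∧
    f i x = false ∧ f i y = true

/-- Negative edge `(j,i)` of the influence graph `G(f)`. -/
def negEdge {ι : Type} (f : ι → (ι → Bool) → Bool) (j i : ι) : Prop :=
  ∃ x y : ι → Bool, (∀ k : ι, k ≠ j → x k = y k) ∧ x j = false ∧ y j = true ∧
    f i x = true ∧ f i y = false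

lemma wIdx_ne_rIdx {n : ℕ} (i j : Fin n) : wIdx i ≠ rIdx j := by
  simp only [wIdx, rIdx, ne_eq, Fin.mk.injEq]; omega

lemma rIdx_inj {n : ℕ} {i j : Fin n} (h : rIdx i = rIdx j) : i = j := by
  simp only [rIdx, Fin.mk.injEq] at h; exact Fin.ext (by omega)

lemma encode_r {n : ℕ} (f : Fin n → (Fin n → Bool) → Bool) (i : Fin n)
    (z : Fin (2 * n) → Bool) : encode f (rIdx i) z = z (wIdx i) := by
  have h1 : ¬ ((rIdx i).val % 2 = 0) := by simp [rIdx]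
  simp only [encode, h1, if_false]
  congr 2
  exact Fin.ext (by simp [rIdx]; omega)

lemma eq_alph_of_consistent {n : ℕ} (z : Fin (2 * n) → Bool)
    (h : ∀ i : Fin n, z (rIdx i) = z (wIdx i)) :
    z = alph (fun i => z (wIdx i)) := by
  funext k
  simp only [alph]
  by_cases hk : k.val % 2 = 0
  · have hw : wIdx (⟨k.val / 2, by have := k.isLt; omega⟩ : Fin n) = k :=
      Fin.ext (by simp [wIdx]; omega)
    rw [hw]
  · have hr : rIdx (⟨k.val / 2, by have := k.isLt; omega⟩ : Fin n) = k :=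
      Fin.ext (by simp [rIdx]; omega)
    rw [← h ⟨k.val / 2, by have := k.isLt; omega⟩, hr]

lemma reach_fix {n : ℕ} (f : Fin n → (Fin n → Bool) → Bool) :
    ∀ (m : ℕ) (z : Fin (2 * n) → Bool),
      (Finset.univ.filter fun i : Fin n => z (rIdx i) ≠ z (wIdx i)).card ≤ m →
      Relation.ReflTransGen (asyncStep (encode f)) z (alph (fun i => z (wIdx i))) := by
  intro m
  induction m with
  | zero =>
      intro z hc
      have hfilter : ∀ i : Fin n, z (rIdx i) = z (wIdx i) := by
        intro i
        by_contra hi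
        have : i ∈ Finset.univ.filter fun i : Fin n => z (rIdx i) ≠ z (wIdx i) := by
          simp [hi]
        have := Finset.card_pos.mpr ⟨i, this⟩
        omega
      rw [← eq_alph_of_consistent z hfilter]
  | succ m ih =>
      intro z hc
      by_cases h : ∀ i : Fin n, z (rIdx i) = z (wIdx i)
      · rw [← eq_alph_of_consistent z h]
      · push_neg at h
        obtain ⟨i, hi⟩ := h
        set z' := Function.update z (rIdx i) (z (wIdx i)) with hz'
        have hstep : asyncStep (encode f) z z' := by
          refine ⟨rIdx i, ?_, ?_, ?_⟩
          · simp [hz', Function.update_self]; exact hi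
          · intro j hj; simp [hz', Function.update_of_ne hj]
          · simp [hz', Function.update_self, encode_r]
        have hw' : ∀ j : Fin n, z' (wIdx j) = z (wIdx j) := by
          intro j; simp [hz', Function.update_of_ne (wIdx_ne_rIdx j i)]
        have hr' : ∀ j : Fin n, j ≠ i → z' (rIdx j) = z (rIdx j) := by
          intro j hj
          have : rIdx j ≠ rIdx i := fun he => hj (rIdx_inj he)
          simp [hz', Function.update_of_ne this]
        have hcard : (Finset.univ.filter fun j : Fin n => z' (rIdx j) ≠ z' (wIdx j)).card ≤ m := by
          have hsub : (Finset.univ.filter fun j : Fin n => z' (rIdx j) ≠ z' (wIdx j)) ⊆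
              (Finset.univ.filter fun j : Fin n => z (rIdx j) ≠ z (wIdx j)).erase i := by
            intro j hj
            simp only [Finset.mem_filter, Finset.mem_univ, true_and] at hj
            have hji : j ≠ i := by
              intro he; subst he
              apply hj
              simp [hz', Function.update_of_ne (wIdx_ne_rIdx _ _)]
            rw [Finset.mem_erase]
            refine ⟨hji, ?_⟩
            simp only [Finset.mem_filter, Finset.mem_univ, true_and]
            rwa [hr' j hji, hw' j] at hj
          have h1 := Finset.card_le_card hsub
          have h2 : ((Finset.univ.filter fun j : Fin n => z (rIdx j) ≠ z (wIdx j)).erase i).card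
              = (Finset.univ.filter fun j : Fin n => z (rIdx j) ≠ z (wIdx j)).card - 1 :=
            Finset.card_erase_of_mem (by simp [hi])
          omega
        have htail := ih z' hcard
        have : (fun j => z' (wIdx j)) = fun j => z (wIdx j) := funext hw'
        rw [this] at htail
        exact Relation.ReflTransGen.head hstep htail


/-- from any inconsistent configuration `z` of the interval-semantics
encoding `⟨f⟩`, some consistent configuration `α(y)` is reachable under the
asynchronous transition relation of `⟨f⟩`. -/
theorem consistent_reachable {n : ℕ} (f : Fin n → (Fin n → Bool) → Bool)
    (z : Fin (2 * n) → Bool) (hz : alph (gam z) ≠ z) :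
    ∃ y : Fin n → Bool, Relation.ReflTransGen (asyncStep (encode f)) z (alph y) :=
  ⟨fun i => z (wIdx i), reach_fix f _ z le_rfl⟩
end

section
/- Fixpoint equivalence, backward direction: Let f be a Boolean network of dimension n and ⟨f⟩ its interval-semantics encoding. If z ∈ 𝔹^{2n} satisfies ⟨f⟩(z) = z, then z is consistent, i.e. α(γ(z)) = z, and γ(z) is a fixpoint of f, i.e. f(γ(z)) = γ(z). -/
/-! At a fixpoint of `⟨f⟩` each read node equals its write node, because the update of the read
node copies the write node. Once the two agree, the update of the write node reduces to
`f_i (γ z)`, so being fixed says exactly that `f_i (γ z) = z_{2i} = γ(z)_i`. -/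

section IntervalEncoding

variable {n : ℕ}

lemma eq_wIdx_or_eq_rIdx (k : Fin (2 * n)) : ∃ i : Fin n, k = wIdx i ∨ k = rIdx i := by
  refine ⟨⟨k.val / 2, by omega⟩, ?_⟩
  rcases Nat.mod_two_eq_zero_or_one k.val with h | h
  · exact .inl (Fin.ext (by simp only [wIdx]; omega))
  · exact .inr (Fin.ext (by simp only [rIdx]; omega))

@[simp]
lemma alph_wIdx (x : Fin n → Bool) (i : Fin n) : alph x (wIdx i) = x i := by
  simp [alph, wIdx]

@[simp]
lemma alph_rIdx (x : Fin n → Bool) (i : Fin n) : alph x (rIdx i) = x i := by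
  simp only [alph, rIdx]
  congr
  omega

lemma alph_gam_of_write_eq_read {z : Fin (2 * n) → Bool}
    (h : ∀ i, z (wIdx i) = z (rIdx i)) : alph (gam z) = z := by
  funext k
  obtain ⟨i, rfl | rfl⟩ := eq_wIdx_or_eq_rIdx k
  · simp [gam, h i]
  · simp [gam]

variable (f : Fin n → (Fin n → Bool) → Bool) (z : Fin (2 * n) → Bool) (i : Fin n)

lemma encode_wIdx : encode f (wIdx i) z =
    ((f i (gam z) && (!z (rIdx i) || z (wIdx i))) || (!z (rIdx i) && z (wIdx i))) := by
  simp [encode, wIdx]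

lemma encode_rIdx : encode f (rIdx i) z = z (wIdx i) := by
  simp only [encode, rIdx, Nat.mul_add_mod_self_left, Nat.mod_succ, one_ne_zero, if_false]
  congr
  omega

lemma encode_wIdx_of_write_eq_read (h : z (wIdx i) = z (rIdx i)) :
    encode f (wIdx i) z = f i (gam z) := by
  rw [encode_wIdx, h]
  cases z (rIdx i) <;> simp

end IntervalEncoding

/-- if `z` is a fixpoint of `⟨f⟩` then `z` is consistent and
`γ(z)` is a fixpoint of `f`. -/
theorem fixpoint_backward {n : ℕ} (f : Fin n → (Fin n → Bool) → Bool)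
    (z : Fin (2 * n) → Bool) (h : ∀ k : Fin (2 * n), encode f k z = z k) :
    alph (gam z) = z ∧ ∀ i : Fin n, f i (gam z) = gam z i := by
  have write_eq_read : ∀ i, z (wIdx i) = z (rIdx i) := fun i => by
    rw [← h (rIdx i), encode_rIdx]
  refine ⟨alph_gam_of_write_eq_read write_eq_read, fun i => ?_⟩
  rw [← encode_wIdx_of_write_eq_read f z i (write_eq_read i), h (wIdx i), write_eq_read i]
  rfl
end

section
/- Most permissive fully asynchronous semantics simulates any multivalued refinement: Let f be a Boolean network of dimension n, m ≥ 1, 𝕄 = {0, 1/m, …, (m−1)/m, 1}, and let F be a multivalued network of dimension n over 𝕄 that refines f. Then for all x, y ∈ 𝕄^n, x →_F y implies abstr(x) ⇝*_f abstr(y), where ⇝*_f is the reflexive-transitive closure of the most permissive fully asynchronous transition relation of f. -/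
/-! A multivalued step moves one component `i` by one unit towards the value `c` that `F i x`
points to, so its abstraction moves along the segment from `abstr x i` towards `c` in the order
`0 < ½ < 1`. The refinement hypothesis yields a Boolean approximation `x'` of `abstr x` with
`f i x' = c`, and the most permissive semantics covers that segment in at most two steps
(`some (!c) → ½ → some c`), each justified by the same `x'`. -/

/-- Multivalued configurations over 𝕄 = {0, 1/m, …, 1}: component `i` has value `x i / m`. -/
abbrev MConf (n m : ℕ) := Fin n → Fin (m + 1)

/-- `abstr : 𝕄^n → {0,½,1}^n`; `some false` = 0, `some true` = 1, `none` = ½. -/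
def abstr {n m : ℕ} (x : MConf n m) : Fin n → Option Bool := fun i =>
  if (x i : ℕ) = 0 then some false else if (x i : ℕ) = m then some true else none

/-- `x'` is a Boolean approximation of the 3-valued configuration `x`. -/
def approx {n : ℕ} (x : Fin n → Option Bool) (x' : Fin n → Bool) : Prop :=
  ∀ (i : Fin n) (b : Bool), x i = some b → x' i = b

/-- Asynchronous transition relation of a multivalued network `F`
(`some true` = ↑, `some false` = ↓, `none` = −); values are scaled by `m`. -/
def mvStep {n m : ℕ} (F : Fin n → MConf n m → Option Bool) (x y : MConf n m) : Prop :=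
  ∃ i : Fin n, x i ≠ y i ∧ (∀ j : Fin n, j ≠ i → x j = y j) ∧
    ((F i x = some false ∧ (y i : ℕ) = (x i : ℕ) - 1) ∨
     (F i x = some true ∧ (y i : ℕ) = min m ((x i : ℕ) + 1)))

/-- `F` refines the Boolean network `f`. -/
def refines {n m : ℕ} (F : Fin n → MConf n m → Option Bool)
    (f : Fin n → (Fin n → Bool) → Bool) : Prop :=
  ∀ (x : MConf n m) (i : Fin n),
    (F i x = some true → ∃ x' : Fin n → Bool, approx (abstr x) x' ∧ f i x' = true) ∧
    (F i x = some false → ∃ x' : Fin n → Bool, approx (abstr x) x' ∧ f i x' = false)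

/-- Most permissive fully asynchronous transition relation of a Boolean network `f`
on 3-valued configurations (`none` = ½). -/
def mpStep {n : ℕ} (f : Fin n → (Fin n → Bool) → Bool)
    (x y : Fin n → Option Bool) : Prop :=
  ∃ (i : Fin n) (x' : Fin n → Bool), approx x x' ∧
    x i ≠ y i ∧ (∀ j : Fin n, j ≠ i → x j = y j) ∧
    (match x i with
     | none => y i = some (f i x')
     | some b => b ≠ f i x' ∧ y i = none)

/-- The values `v` on the segment from `u` to `some c` in the order `0 < ½ < 1`. -/
def InSegment (u : Option Bool) (c : Bool) (v : Option Bool) : Prop :=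
  v = u ∨ v = some c ∨ (v = none ∧ u ≠ some c)

section BooleanNetwork

variable {n : ℕ} {f : Fin n → (Fin n → Bool) → Bool} {x : Fin n → Option Bool}
  {x' : Fin n → Bool} {i : Fin n}

theorem approx_update_none (hx : approx x x') : approx (Function.update x i none) x' := by
  intro j b hj
  by_cases hji : j = i
  · subst hji
    simp at hj
  · exact hx j b (by simpa [hji] using hj)

theorem mpStep_update_none {b : Bool} (hx : approx x x') (hxi : x i = some b)
    (hb : b ≠ f i x') : mpStep f x (Function.update x i none) := by
  refine ⟨i, x', hx, by simp [hxi], fun j hj => by simp [hj], ?_⟩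
  simp only [hxi, Function.update_self]
  exact ⟨hb, trivial⟩

theorem mpStep_update_some (hx : approx x x') (hxi : x i = none) :
    mpStep f x (Function.update x i (some (f i x'))) := by
  refine ⟨i, x', hx, by simp [hxi], fun j hj => by simp [hj], ?_⟩
  simp only [hxi, Function.update_self]

theorem reflTransGen_mpStep_update_some (hx : approx x x') :
    Relation.ReflTransGen (mpStep f) x (Function.update x i (some (f i x'))) := by
  rcases hxi : x i with _ | b
  · exact .single (mpStep_update_some hx hxi)
  · by_cases hb : b = f i x'
    · rw [← hb, ← hxi, Function.update_eq_self]
    · have hnone := mpStep_update_none (f := f) hx hxi hb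
      have hsome := mpStep_update_some (f := f) (approx_update_none (i := i) hx)
        (Function.update_self i none x)
      rw [Function.update_idem] at hsome
      exact .tail (.single hnone) hsome

theorem reflTransGen_mpStep_update_of_inSegment {v : Option Bool} (hx : approx x x')
    (hv : InSegment (x i) (f i x') v) :
    Relation.ReflTransGen (mpStep f) x (Function.update x i v) := by
  rcases hv with rfl | rfl | ⟨rfl, hxi⟩
  · rw [Function.update_eq_self]
  · exact reflTransGen_mpStep_update_some hx
  · rcases hxi' : x i with _ | b
    · rw [← hxi', Function.update_eq_self]
    · exact .single (mpStep_update_none hx hxi' fun hb => hxi (hb ▸ hxi'))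

end BooleanNetwork

section Multivalued

variable {n m : ℕ} {x y : MConf n m} {i : Fin n}

theorem abstr_eq_update_of_forall_ne_eq (hrest : ∀ j, j ≠ i → x j = y j) :
    abstr y = Function.update (abstr x) i (abstr y i) := by
  funext j
  by_cases hji : j = i
  · subst hji
    simp
  · simp [hji, abstr, hrest j hji]

theorem inSegment_abstr_of_decr (hne : x i ≠ y i) (hy : (y i : ℕ) = (x i : ℕ) - 1) :
    InSegment (abstr x i) false (abstr y i) := by
  have hxi : (x i : ℕ) ≠ (y i : ℕ) := fun h => hne (Fin.ext h)
  have hle : (x i : ℕ) ≤ m := Nat.lt_succ_iff.mp (x i).isLt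
  unfold InSegment abstr
  split_ifs <;> simp <;> omega

theorem inSegment_abstr_of_incr (hne : x i ≠ y i) (hy : (y i : ℕ) = min m ((x i : ℕ) + 1)) :
    InSegment (abstr x i) true (abstr y i) := by
  have hxi : (x i : ℕ) ≠ (y i : ℕ) := fun h => hne (Fin.ext h)
  have hle : (x i : ℕ) ≤ m := Nat.lt_succ_iff.mp (x i).isLt
  unfold InSegment abstr
  split_ifs <;> simp <;> omega

theorem refines.exists_approx {f : Fin n → (Fin n → Bool) → Bool}
    {F : Fin n → MConf n m → Option Bool} (hF : refines F f) {c : Bool} (hc : F i x = some c) :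
    ∃ x' : Fin n → Bool, approx (abstr x) x' ∧ f i x' = c := by
  cases c
  exacts [(hF x i).2 hc, (hF x i).1 hc]

end Multivalued

theorem mp_simulates_multivalued_general {n m : ℕ}
    (f : Fin n → (Fin n → Bool) → Bool)
    (F : Fin n → MConf n m → Option Bool) (hF : refines F f)
    (x y : MConf n m) (hxy : mvStep F x y) :
    Relation.ReflTransGen (mpStep f) (abstr x) (abstr y) := by
  obtain ⟨i, hne, hrest, hmove⟩ := hxy
  obtain ⟨c, hFc, hseg⟩ : ∃ c, F i x = some c ∧ InSegment (abstr x i) c (abstr y i) := by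
    rcases hmove with ⟨hFc, hy⟩ | ⟨hFc, hy⟩
    exacts [⟨false, hFc, inSegment_abstr_of_decr hne hy⟩,
      ⟨true, hFc, inSegment_abstr_of_incr hne hy⟩]
  obtain ⟨x', hx', rfl⟩ := hF.exists_approx hFc
  rw [abstr_eq_update_of_forall_ne_eq hrest]
  exact reflTransGen_mpStep_update_of_inSegment hx' hseg

/-- the most permissive fully asynchronous semantics of `f`
simulates every multivalued refinement `F` of `f`. -/
theorem mp_simulates_multivalued {n m : ℕ} (hm : 1 ≤ m)
    (f : Fin n → (Fin n → Bool) → Bool)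
    (F : Fin n → MConf n m → Option Bool) (hF : refines F f)
    (x y : MConf n m) (hxy : mvStep F x y) :
    Relation.ReflTransGen (mpStep f) (abstr x) (abstr y) :=
  mp_simulates_multivalued_general f F hF x y hxy
end

section
/- Encoding Read Petri nets in Boolean networks: Let N = (P, T, pre, cont, post, M₀) be a loop-free RPN (pre(t) ∩ post(t) = ∅ for all t ∈ T) which is safe in the sense that for every marking M'' reachable by firing transitions from a given marking M ⊆ P and every transition t enabled in M'', (M'' \ pre(t)) ∩ post(t) = ∅. Let g = ⟦N⟧ be the BN of dimension |P|+|T| defined by: for p ∈ P, g_p(x) = (⋁_{t ∈ T, p ∈ post(t)} x_t) ∨ (x_p ∧ ⋀_{t ∈ T, p ∈ pre(t)} ¬x_t); and for t ∈ T, g_t(x) = (⋀_{p ∈ pre(t) ∪ cont(t)} x_p ∧ ⋀_{t' ∈ T} ¬x_{t'}) ∨ (x_t ∧ (⋁_{p ∈ post(t)} ¬x_p ∨ ⋁_{p ∈ pre(t)} x_p)). For a marking M ⊆ P let ⟦M⟧ be the configuration with ⟦M⟧_p = 1 iff p ∈ M and ⟦M⟧_t = 0 for all t ∈ T. Then for all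 markings M, M' ⊆ P: M' is reachable from M by a sequence of transition firings of N if and only if ⟦M⟧ →*_g ⟦M'⟧ under the asynchronous transition relation of g. -/
set_option linter.unusedSectionVars false


/-- A (safe) Read Petri net with places `P` and transitions `T`:
nonempty presets, contexts disjoint from presets, and an initial marking. -/
structure RPN (P T : Type) [DecidableEq P] where
  pre : T → Finset P
  cont : T → Finset P
  post : T → Finset P
  M0 : Finset P
  pre_nonempty : ∀ t, (pre t).Nonempty
  cont_disjoint : ∀ t, Disjoint (cont t) (pre t)

variable {P T : Type} [DecidableEq P] [DecidableEq T] [Fintype P] [Fintype T]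

/-- A transition is enabled when its preset and context are marked. -/
def enabled (N : RPN P T) (t : T) (M : Finset P) : Prop :=
  N.pre t ∪ N.cont t ⊆ M

/-- Firing an enabled transition `t` from marking `M` leads to `M'`. -/
def fire (N : RPN P T) (t : T) (M M' : Finset P) : Prop :=
  enabled N t M ∧ M' = (M \ N.pre t) ∪ N.post t

/-- Reachability between markings of an RPN by sequences of transition firings. -/
def reach (N : RPN P T) : Finset P → Finset P → Prop :=
  Relation.ReflTransGen (fun A B => ∃ t, fire N t A B)

/-- The Boolean network `⟦N⟧` of dimension |P|+|T| encoding the RPN `N`;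
components are indexed by `P ⊕ T`. -/
def encodeRPN (N : RPN P T) : (P ⊕ T) → ((P ⊕ T) → Bool) → Bool
  | Sum.inl p, x =>
      decide (∃ t : T, p ∈ N.post t ∧ x (Sum.inr t) = true) ||
      (x (Sum.inl p) && decide (∀ t : T, p ∈ N.pre t → x (Sum.inr t) = false))
  | Sum.inr t, x =>
      (decide (∀ p ∈ N.pre t ∪ N.cont t, x (Sum.inl p) = true) &&
       decide (∀ t' : T, x (Sum.inr t') = false)) ||
      (x (Sum.inr t) &&
       (decide (∃ p ∈ N.post t, x (Sum.inl p) = false) ||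
        decide (∃ p ∈ N.pre t, x (Sum.inl p) = true)))

/-- The configuration `⟦M⟧` of `⟦N⟧` corresponding to a marking `M`. -/
def markConf (M : Finset P) : (P ⊕ T) → Bool
  | Sum.inl p => decide (p ∈ M)
  | Sum.inr _ => false

/-! Auxiliary definitions -/

def placesOf (x : (P ⊕ T) → Bool) : Finset P :=
  Finset.univ.filter (fun p => x (Sum.inl p) = true)

lemma mem_placesOf {x : (P ⊕ T) → Bool} {p : P} :
    p ∈ placesOf x ↔ x (Sum.inl p) = true := by
  simp [placesOf]

def midConf (t : T) (S : Finset P) : (P ⊕ T) → Bool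
  | Sum.inl p => decide (p ∈ S)
  | Sum.inr t' => decide (t' = t)

lemma placesOf_markConf (M : Finset P) : placesOf (markConf (T := T) M) = M := by
  ext p; simp [mem_placesOf, markConf]

lemma placesOf_midConf (t : T) (S : Finset P) : placesOf (midConf t S) = S := by
  ext p; simp [mem_placesOf, midConf]

/-! Forward simulation steps -/

lemma step_on (N : RPN P T) {t : T} {S : Finset P} (hen : enabled N t S) :
    asyncStep (encodeRPN N) (markConf S) (midConf t S) := by
  refine ⟨Sum.inr t, ?_, ?_, ?_⟩
  · simp [markConf, midConf]
  · intro j hj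
    cases j with
    | inl p => simp [markConf, midConf]
    | inr t' =>
        have ht' : t' ≠ t := fun h => hj (by rw [h])
        simp [markConf, midConf, ht']
  · simp only [markConf, midConf, encodeRPN]
    simp
    intro p hp
    exact hen (Finset.mem_union.mpr hp)

lemma step_off (N : RPN P T) {t : T} {S : Finset P}
    (hpre : ∀ p ∈ N.pre t, p ∉ S) (hpost : N.post t ⊆ S) :
    asyncStep (encodeRPN N) (midConf t S) (markConf S) := by
  refine ⟨Sum.inr t, ?_, ?_, ?_⟩
  · simp [markConf, midConf]
  · intro j hj
    cases j with
    | inl p => simp [markConf, midConf]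
    | inr t' =>
        simp only [markConf, midConf, decide_eq_false_iff_not]
        intro h; exact hj (by rw [h])
  · simp only [markConf, midConf, encodeRPN]
    have h1 : (decide (∀ t' : T, (decide (t' = t) : Bool) = false) : Bool) = false := by
      simp
    erw [h1]
    have h2 : (decide (∃ p ∈ N.post t, (decide (p ∈ S) : Bool) = false) : Bool) = false := by
      simp only [decide_eq_false_iff_not, not_exists, not_and]
      intro p hp; simp [hpost hp]
    have h3 : (decide (∃ p ∈ N.pre t, (decide (p ∈ S) : Bool) = true) : Bool) = false := by
      simp only [decide_eq_false_iff_not, not_exists, not_and]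
      intro p hp; simp [hpre p hp]
    erw [h2, h3]
    simp

lemma step_erase (N : RPN P T) {t : T} {S : Finset P} {p : P}
    (hp : p ∈ N.pre t) (hnp : p ∉ N.post t) (hps : p ∈ S) :
    asyncStep (encodeRPN N) (midConf t S) (midConf t (S.erase p)) := by
  refine ⟨Sum.inl p, ?_, ?_, ?_⟩
  · simp [midConf, hps]
  · intro j hj
    cases j with
    | inl q =>
        simp only [midConf, decide_eq_decide, Finset.mem_erase]
        have : q ≠ p := fun h => hj (by rw [h])
        simp [this]
    | inr t' => simp [midConf]
  · simp only [midConf, encodeRPN]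
    have h1 : (decide (∃ t' : T, p ∈ N.post t' ∧ (decide (t' = t) : Bool) = true) : Bool)
        = false := by
      simp only [decide_eq_false_iff_not, not_exists, not_and, decide_eq_true_iff]
      rintro t' ht' rfl; exact hnp ht'
    have h2 : (decide (∀ t' : T, p ∈ N.pre t' → (decide (t' = t) : Bool) = false) : Bool)
        = false := by
      simp only [decide_eq_false_iff_not, not_forall]
      exact ⟨t, hp, by simp⟩
    erw [h1, h2]
    simp

lemma step_insert (N : RPN P T) {t : T} {S : Finset P} {p : P}
    (hp : p ∈ N.post t) (hps : p ∉ S) :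
    asyncStep (encodeRPN N) (midConf t S) (midConf t (insert p S)) := by
  refine ⟨Sum.inl p, ?_, ?_, ?_⟩
  · simp [midConf, hps]
  · intro j hj
    cases j with
    | inl q =>
        simp only [midConf, decide_eq_decide, Finset.mem_insert]
        have : q ≠ p := fun h => hj (by rw [h])
        simp [this]
    | inr t' => simp [midConf]
  · simp only [midConf, encodeRPN]
    have h1 : (decide (∃ t' : T, p ∈ N.post t' ∧ (decide (t' = t) : Bool) = true) : Bool)
        = true := by
      simp only [decide_eq_true_iff]
      exact ⟨t, hp, by simp⟩
    erw [h1]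
    simp

lemma chain_erase (N : RPN P T) (t : T) (A : Finset P) (hA : A ⊆ N.pre t)
    (hloop : Disjoint (N.pre t) (N.post t)) (S : Finset P) :
    Relation.ReflTransGen (asyncStep (encodeRPN N)) (midConf t S) (midConf t (S \ A)) := by
  classical
  induction A using Finset.induction generalizing S with
  | empty =>
      rw [Finset.sdiff_empty]
  | @insert a A ha ih =>
      have h1 := ih (fun q hq => hA (Finset.mem_insert_of_mem hq)) S
      have ha' : a ∈ N.pre t := hA (Finset.mem_insert_self a A)
      have heq : S \ insert a A = (S \ A).erase a := by
        rw [Finset.sdiff_insert]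
      rw [heq]
      by_cases hin : a ∈ S \ A
      · exact h1.tail (step_erase N ha' (Finset.disjoint_left.mp hloop ha') hin)
      · rw [Finset.erase_eq_of_notMem hin]; exact h1

lemma chain_insert (N : RPN P T) (t : T) (B : Finset P) (hB : B ⊆ N.post t) (S : Finset P) :
    Relation.ReflTransGen (asyncStep (encodeRPN N)) (midConf t S) (midConf t (S ∪ B)) := by
  classical
  induction B using Finset.induction generalizing S with
  | empty =>
      rw [Finset.union_empty]
  | @insert b B hb ih =>
      have h1 := ih (fun q hq => hB (Finset.mem_insert_of_mem hq)) S
      have hb' : b ∈ N.post t := hB (Finset.mem_insert_self b B)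
      have heq : S ∪ insert b B = insert b (S ∪ B) := by
        rw [Finset.union_insert]
      rw [heq]
      by_cases hin : b ∈ S ∪ B
      · rw [Finset.insert_eq_of_mem hin]; exact h1
      · exact h1.tail (step_insert N hb' hin)

lemma fire_sim (N : RPN P T) (hloop : ∀ t : T, Disjoint (N.pre t) (N.post t))
    {t : T} {S S' : Finset P} (hf : fire N t S S') :
    Relation.ReflTransGen (asyncStep (encodeRPN N)) (markConf S) (markConf S') := by
  obtain ⟨hen, rfl⟩ := hf
  refine Relation.ReflTransGen.head (step_on N hen) ?_
  refine Relation.ReflTransGen.trans (chain_erase N t (N.pre t) (Finset.Subset.refl _) (hloop t) S) ?_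
  refine Relation.ReflTransGen.trans (chain_insert N t (N.post t) (Finset.Subset.refl _) (S \ N.pre t)) ?_
  refine Relation.ReflTransGen.single (step_off N ?_ ?_)
  · intro p hp
    simp only [Finset.mem_union, Finset.mem_sdiff, not_or, not_and]
    exact ⟨fun _ h => h hp, Finset.disjoint_left.mp (hloop t) hp⟩
  · exact Finset.subset_union_right

/-! The invariant for the backward direction -/

def RPNInv (N : RPN P T) (M : Finset P) (x : (P ⊕ T) → Bool) : Prop :=
  ((∀ t : T, x (Sum.inr t) = false) ∧ reach N M (placesOf x)) ∨
  (∃ t M'' A B, reach N M M'' ∧ enabled N t M'' ∧ A ⊆ N.pre t ∧ B ⊆ N.post t ∧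
    (∀ t' : T, x (Sum.inr t') = decide (t' = t)) ∧ placesOf x = (M'' \ A) ∪ B)

lemma inv_step (N : RPN P T) (hloop : ∀ t : T, Disjoint (N.pre t) (N.post t))
    (M : Finset P)
    (hsafe : ∀ M'' : Finset P, reach N M M'' →
      ∀ t : T, enabled N t M'' → Disjoint (M'' \ N.pre t) (N.post t))
    {x y : (P ⊕ T) → Bool} (hx : RPNInv N M x) (h : asyncStep (encodeRPN N) x y) :
    RPNInv N M y := by
  classical
  obtain ⟨i, hne, hag, hy⟩ := h
  rcases hx with ⟨hT, hR⟩ | ⟨t0, M'', A, B, hreach, hen, hA, hB, hT, hS⟩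
  · -- all transitions off
    cases i with
    | inl p =>
        exfalso
        apply hne
        rw [hy]
        simp [encodeRPN, hT]
    | inr t =>
        have hxt : x (Sum.inr t) = false := hT t
        have hyt : y (Sum.inr t) = true := by
          cases hyt : y (Sum.inr t) with
          | false => exact absurd (hxt.trans hyt.symm) hne
          | true => rfl
        have hg : encodeRPN N (Sum.inr t) x = true := by rw [← hy, hyt]
        simp only [encodeRPN, hxt, Bool.false_and, Bool.or_false, Bool.and_eq_true,
          decide_eq_true_eq] at hg
        refine Or.inr ⟨t, placesOf x, ∅, ∅, hR, ?_, Finset.empty_subset _,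
          Finset.empty_subset _, ?_, ?_⟩
        · intro p hp
          exact mem_placesOf.mpr (hg.1 p hp)
        · intro t'
          by_cases ht' : t' = t
          · subst ht'; simp [hyt]
          · rw [← hag (Sum.inr t') (by simpa using ht'), hT t']
            simp [ht']
        · simp only [Finset.sdiff_empty, Finset.union_empty]
          ext q; simp only [mem_placesOf]
          rw [← hag (Sum.inl q) (by simp)]
  · -- transition t0 currently firing
    have hxt0 : x (Sum.inr t0) = true := by simpa using hT t0
    cases i with
    | inl p =>
        by_cases hpost : p ∈ N.post t0
        · -- p turns on
          have hg : encodeRPN N (Sum.inl p) x = true := by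
            simp only [encodeRPN, Bool.or_eq_true, decide_eq_true_eq]
            exact Or.inl ⟨t0, hpost, hxt0⟩
          have hyp : y (Sum.inl p) = true := by rw [hy, hg]
          have hxp : x (Sum.inl p) = false := by
            cases hxp : x (Sum.inl p) with
            | false => rfl
            | true => exact absurd (hxp.trans hyp.symm) hne
          refine Or.inr ⟨t0, M'', A, insert p B, hreach, hen, hA,
            Finset.insert_subset hpost hB, ?_, ?_⟩
          · intro t'; rw [← hag (Sum.inr t') (by simp), hT t']
          · have hplaces : placesOf y = insert p (placesOf x) := by
              ext q
              by_cases hq : q = p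
              · subst hq; simp [mem_placesOf, hyp]
              · simp only [mem_placesOf, Finset.mem_insert, hq, false_or]
                rw [hag (Sum.inl q) (by simp [hq])]
            rw [hplaces, hS, Finset.union_insert]
        · by_cases hpre : p ∈ N.pre t0
          · -- p turns off
            have hg : encodeRPN N (Sum.inl p) x = false := by
              simp only [encodeRPN, Bool.or_eq_false_iff, Bool.and_eq_false_iff]
              constructor
              · simp only [decide_eq_false_iff_not, not_exists, not_and]
                intro t' ht'
                rw [hT t']
                simp only [decide_eq_true_iff]
                rintro rfl; exact hpost ht'
              · right
                simp only [decide_eq_false_iff_not, not_forall]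
                exact ⟨t0, hpre, by simp [hT t0]⟩
            have hyp : y (Sum.inl p) = false := by rw [hy, hg]
            have hxp : x (Sum.inl p) = true := by
              cases hxp : x (Sum.inl p) with
              | true => rfl
              | false => exact absurd (hxp.trans hyp.symm) hne
            have hpB : p ∉ B := fun hpB =>
              Finset.disjoint_left.mp (hloop t0) hpre (hB hpB)
            refine Or.inr ⟨t0, M'', insert p A, B, hreach, hen,
              Finset.insert_subset hpre hA, hB, ?_, ?_⟩
            · intro t'; rw [← hag (Sum.inr t') (by simp), hT t']
            · have hplaces : placesOf y = (placesOf x).erase p := by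
                ext q
                by_cases hq : q = p
                · subst hq; simp [mem_placesOf, hyp]
                · simp only [mem_placesOf, Finset.mem_erase, hq, true_and,
                    ne_eq, not_false_iff]
                  rw [← hag (Sum.inl q) (by simp [hq])]
              rw [hplaces, hS]
              ext q
              by_cases hq : q = p
              · subst hq; simp [hpB]
              · simp [Finset.mem_erase, Finset.mem_sdiff, Finset.mem_insert, hq]
          · -- p unchanged: impossible
            exfalso
            apply hne
            rw [hy]
            have h1 : (decide (∃ t' : T, p ∈ N.post t' ∧ x (Sum.inr t') = true) : Bool)
                = false := by
              simp only [decide_eq_false_iff_not, not_exists, not_and]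
              intro t' ht'
              rw [hT t']
              simp only [decide_eq_true_iff]
              rintro rfl; exact hpost ht'
            have h2 : (decide (∀ t' : T, p ∈ N.pre t' → x (Sum.inr t') = false) : Bool)
                = true := by
              simp only [decide_eq_true_iff]
              intro t' ht'
              rw [hT t']
              simp only [decide_eq_false_iff_not]
              rintro rfl; exact hpre ht'
            simp [encodeRPN, h1, h2]
    | inr t =>
        by_cases ht : t = t0
        · subst ht
          -- t turns off
          have hyt : y (Sum.inr t) = false := by
            cases hyt : y (Sum.inr t) with
            | true => exact absurd (hxt0.trans hyt.symm) hne
            | false => rfl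
          have hg : encodeRPN N (Sum.inr t) x = false := by rw [← hy, hyt]
          simp only [encodeRPN, hxt0, Bool.true_and, Bool.or_eq_false_iff,
            Bool.and_eq_false_iff, decide_eq_false_iff_not, not_exists, not_and] at hg
          obtain ⟨_, hpost, hpre⟩ := hg
          have hpostS : N.post t ⊆ placesOf x := by
            intro p hp
            have := hpost p hp
            cases hxp : x (Sum.inl p) with
            | false => exact absurd hxp this
            | true => exact mem_placesOf.mpr hxp
          have hpreS : ∀ p ∈ N.pre t, p ∉ placesOf x := by
            intro p hp hmem
            exact hpre p hp (mem_placesOf.mp hmem)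
          have hAeq : A = N.pre t := by
            refine Finset.Subset.antisymm hA ?_
            intro p hp
            by_contra hpA
            have hmem : p ∈ placesOf x := by
              rw [hS]
              exact Finset.mem_union_left _
                (Finset.mem_sdiff.mpr ⟨hen (Finset.mem_union_left _ hp), hpA⟩)
            exact hpreS p hp hmem
          have hBeq : B = N.post t := by
            refine Finset.Subset.antisymm hB ?_
            intro p hp
            have hmem := hpostS hp
            rw [hS] at hmem
            rcases Finset.mem_union.mp hmem with hm | hm
            · exfalso
              have hdis := hsafe M'' hreach t hen
              rw [hAeq] at hm
              exact Finset.disjoint_left.mp hdis hm hp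
            · exact hm
          have hMeq : placesOf x = (M'' \ N.pre t) ∪ N.post t := by
            rw [hS, hAeq, hBeq]
          refine Or.inl ⟨?_, ?_⟩
          · intro t'
            by_cases ht' : t' = t
            · subst ht'; exact hyt
            · rw [← hag (Sum.inr t') (by simpa using ht'), hT t']
              simp [ht']
          · have hplaces : placesOf y = placesOf x := by
              ext q; simp only [mem_placesOf]
              rw [← hag (Sum.inl q) (by simp)]
            rw [hplaces, hMeq]
            exact hreach.tail ⟨t, hen, rfl⟩
        · -- other transitions can't move
          exfalso
          apply hne
          rw [hy]
          have hxt : x (Sum.inr t) = false := by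
            rw [hT t]; simp [ht]
          have h1 : (decide (∀ t' : T, x (Sum.inr t') = false) : Bool) = false := by
            simp only [decide_eq_false_iff_not, not_forall]
            exact ⟨t0, by simp [hxt0]⟩
          simp [encodeRPN, h1, hxt]

lemma inv_mono (N : RPN P T) (hloop : ∀ t : T, Disjoint (N.pre t) (N.post t))
    (M : Finset P)
    (hsafe : ∀ M'' : Finset P, reach N M M'' →
      ∀ t : T, enabled N t M'' → Disjoint (M'' \ N.pre t) (N.post t))
    {x y : (P ⊕ T) → Bool} (hx : RPNInv N M x)
    (h : Relation.ReflTransGen (asyncStep (encodeRPN N)) x y) : RPNInv N M y := by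
  induction h with
  | refl => exact hx
  | tail _ hstep ih => exact inv_step N hloop M hsafe ih hstep


/-- for a loop-free RPN `N`, safe along every marking reachable from `M`,
a marking `M'` is reachable from `M` in `N` iff `⟦M'⟧` is reachable from `⟦M⟧`
under the asynchronous transition relation of the Boolean network `⟦N⟧`. -/
theorem rpn_to_bn_correct (N : RPN P T)
    (hloop : ∀ t : T, Disjoint (N.pre t) (N.post t))
    (M M' : Finset P)
    (hsafe : ∀ M'' : Finset P, reach N M M'' →
      ∀ t : T, enabled N t M'' → Disjoint (M'' \ N.pre t) (N.post t)) :
    reach N M M' ↔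
      Relation.ReflTransGen (asyncStep (encodeRPN N))
        (markConf (T := T) M) (markConf (T := T) M') := by
  constructor
  · intro hr
    induction hr with
    | refl => exact Relation.ReflTransGen.refl
    | tail _ hstep ih =>
        obtain ⟨t, hf⟩ := hstep
        exact ih.trans (fire_sim N hloop hf)
  · intro hr
    have hRPNInv : RPNInv N M (markConf (T := T) M') := by
      have h0 : RPNInv N M (markConf (T := T) M) := by
        left
        refine ⟨fun t => rfl, ?_⟩
        rw [placesOf_markConf]
        exact Relation.ReflTransGen.refl
      exact inv_mono N hloop M hsafe h0 hr
    rcases hRPNInv with ⟨_, hR⟩ | ⟨t0, _, _, _, _, _, _, _, hT, _⟩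
    · rwa [placesOf_markConf] at hR
    · have := hT t0
      simp [markConf] at this
end
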